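/- arXiv:1306.1164 — 6 statements merged into one kernel-verified Lean document; each statement's English description precedes it below -/
import Mathlib

section
/- Let (D, D̃) be compatible connections K → F → E and let s ∈ Sol(F, D), i.e. D(s) = 0. Choose any α ∈ Γ(K) with l̃∘α = s (possible since l̃ is surjective). Then: (a) l∘D̃(α) = 0, so D̃(α) ∈ Ω¹(M, g) with g = ker l; (b) D_X(D̃(α)(Y)) − D_Y(D̃(α)(X)) − l(D̃(α)([X,Y])) = 0 for all vector fields X, Y; and (c) s lies in the image of l̃: Sol(K, D̃) → Sol(F, D) if and only if there exists β ∈ Γ(ker l̃) with D̃(α) = D̃(β). Moreover, if ∂_{D̃} is injective (D̃ is standard), then l̃: Sol(K, D̃) → Sol(F, D) is injective. -/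
/-- (Algebraic model: `R = C∞(M)`, vector fields are
`Derivation ℝ R R`, sections of bundles are `R`-modules.)  Let `(D̃, l̃) : K → F` and
`(D, l) : F → E` be relative connections forming a compatible pair, and let
`s ∈ Sol(F, D)`, i.e. `D(s) = 0`, with `α ∈ Γ(K)` any lift, `l̃(α) = s`.  Then:
(a) `l ∘ D̃(α) = 0`, so `D̃(α)` is a `g = ker l`-valued 1-form;
(b) `D_X(D̃α(Y)) − D_Y(D̃α(X)) − l(D̃α([X,Y])) = 0` for all vector fields `X, Y`;
(c) `s` is the image under `l̃` of a solution of `(K, D̃)` iff there is `β ∈ Γ(ker l̃)`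
with `D̃(α) = D̃(β)`; and
(d) if `D̃` is standard (its symbol map is injective), then
`l̃ : Sol(K, D̃) → Sol(F, D)` is injective. -/
theorem solutions_of_compatible_connections
    {R K F E : Type*} [CommRing R] [Algebra ℝ R]
    [AddCommGroup K] [Module R K] [AddCommGroup F] [Module R F]
    [AddCommGroup E] [Module R E]
    (lt : K →ₗ[R] F) (l : F →ₗ[R] E)
    (hlt : Function.Surjective lt) (hl : Function.Surjective l)
    (Dt : K → (Derivation ℝ R R →ₗ[R] F))
    (D : F → (Derivation ℝ R R →ₗ[R] E))
    (hDtadd : ∀ s t : K, Dt (s + t) = Dt s + Dt t)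
    (hDadd : ∀ s t : F, D (s + t) = D s + D t)
    (hDtleib : ∀ (f : R) (s : K) (X : Derivation ℝ R R),
      Dt (f • s) X = f • Dt s X + (X f) • lt s)
    (hDleib : ∀ (f : R) (s : F) (X : Derivation ℝ R R),
      D (f • s) X = f • D s X + (X f) • l s)
    (hc₁ : ∀ (s : K) (X : Derivation ℝ R R), D (lt s) X = l (Dt s X))
    (hc₂ : ∀ (s : K) (X Y : Derivation ℝ R R),
      D (Dt s Y) X - D (Dt s X) Y - l (Dt s ⁅X, Y⁆) = 0)
    (α : K) (s : F) (hα : lt α = s) (hs : D s = 0) :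
    (∀ X : Derivation ℝ R R, l (Dt α X) = 0) ∧
    (∀ X Y : Derivation ℝ R R,
      D (Dt α Y) X - D (Dt α X) Y - l (Dt α ⁅X, Y⁆) = 0) ∧
    ((∃ β : K, Dt β = 0 ∧ lt β = s) ↔ (∃ β : K, lt β = 0 ∧ Dt α = Dt β)) ∧
    ((∀ v : K, lt v = 0 → Dt v = 0 → v = 0) →
      ∀ β γ : K, Dt β = 0 → Dt γ = 0 → lt β = lt γ → β = γ) := by
  have hsub : ∀ a b : K, Dt (a - b) = Dt a - Dt b := by
    intro a b
    have h := hDtadd (a - b) b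
    simp at h
    rw [h]; abel
  refine ⟨?_, ?_, ?_, ?_⟩
  · intro X
    rw [← hc₁, hα, hs]; simp
  · intro X Y; exact hc₂ α X Y
  · constructor
    · rintro ⟨β, hβD, hβl⟩
      refine ⟨α - β, ?_, ?_⟩
      · simp [hα, hβl]
      · rw [hsub, hβD]; abel
    · rintro ⟨β, hβl, hβD⟩
      refine ⟨α - β, ?_, ?_⟩
      · rw [hsub, hβD]; abel
      · simp [hα, hβl]
  · intro hinj β γ hβ hγ hlt
    have h1 : lt (β - γ) = 0 := by simp [hlt]
    have h2 : Dt (β - γ) = 0 := by rw [hsub, hβ, hγ]; abel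
    exact sub_eq_zero.mp (hinj _ h1 h2)
end

section
/- For a relative connection (D, l): F → E, a section ξ of J¹F with Spencer decomposition ξ = (α, ω) ∈ Γ(F) ⊕ Ω¹(M, F) satisfies both ξ ∈ Γ(P_D(F)) and D^clas(ξ) = 0 if and only if ω = 0 and D(α) = 0. Consequently the first jet map j¹: Sol(F, D) → Sol(P_D(F), D^{(1)}), s ↦ j¹s, is a bijection with inverse induced by the projection pr: P_D(F) → F. -/
/-- (Algebraic model: `R = C∞(M)`, vector fields are
`Derivation ℝ R R`, sections of bundles are `R`-modules; a section of `J¹F` is a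
Spencer pair `(α, ω) ∈ Γ(F) ⊕ Ω¹(M, F)`, the classical Spencer operator sends `(α, ω)`
to `ω` and the projection `pr` sends it to `α`.)  For a relative connection
`(D, l) : F → E`, a section `ξ = (α, ω)` of `J¹F` lies in `Γ(P_D(F))`
(i.e. `D α = l ∘ ω` and the curvature
`ϰ_D(α, ω)(X, Y) = D_X(ωY) − D_Y(ωX) − l(ω[X,Y])` vanishes) and satisfies
`D^clas ξ = 0` if and only if `ω = 0` and `D α = 0`.  Consequently
`j¹ : Sol(F, D) → Sol(P_D(F), D⁽¹⁾)`, `α ↦ (α, 0)`, is a bijection with inverse induced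
by `pr : (α, ω) ↦ α`. -/
theorem prolongation_solutions_bijection
    {R F E : Type*} [CommRing R] [Algebra ℝ R]
    [AddCommGroup F] [Module R F] [AddCommGroup E] [Module R E]
    (l : F →ₗ[R] E) (hl : Function.Surjective l)
    (D : F → (Derivation ℝ R R →ₗ[R] E))
    (hadd : ∀ s t : F, D (s + t) = D s + D t)
    (hleib : ∀ (f : R) (s : F) (X : Derivation ℝ R R),
      D (f • s) X = f • D s X + (X f) • l s) :
    (∀ (α : F) (ω : Derivation ℝ R R →ₗ[R] F),
      ((D α = l ∘ₗ ω ∧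
        (∀ X Y : Derivation ℝ R R, D (ω Y) X - D (ω X) Y - l (ω ⁅X, Y⁆) = 0)) ∧
        ω = 0)
      ↔ (ω = 0 ∧ D α = 0)) ∧
    Set.BijOn (fun p : F × (Derivation ℝ R R →ₗ[R] F) => p.1)
      {p : F × (Derivation ℝ R R →ₗ[R] F) |
        (D p.1 = l ∘ₗ p.2 ∧
          (∀ X Y : Derivation ℝ R R, D (p.2 Y) X - D (p.2 X) Y - l (p.2 ⁅X, Y⁆) = 0)) ∧
        p.2 = 0}
      {α : F | D α = 0} ∧
    Set.BijOn (fun α : F => (α, (0 : Derivation ℝ R R →ₗ[R] F)))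
      {α : F | D α = 0}
      {p : F × (Derivation ℝ R R →ₗ[R] F) |
        (D p.1 = l ∘ₗ p.2 ∧
          (∀ X Y : Derivation ℝ R R, D (p.2 Y) X - D (p.2 X) Y - l (p.2 ⁅X, Y⁆) = 0)) ∧
        p.2 = 0} := by
  have hD0 : D 0 = 0 := by
    have := hadd 0 0
    rw [add_zero] at this
    exact left_eq_add.mp this
  have key : ∀ (α : F) (ω : Derivation ℝ R R →ₗ[R] F),
      ((D α = l ∘ₗ ω ∧
        (∀ X Y : Derivation ℝ R R, D (ω Y) X - D (ω X) Y - l (ω ⁅X, Y⁆) = 0)) ∧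
        ω = 0)
      ↔ (ω = 0 ∧ D α = 0) := by
    intro α ω
    constructor
    · rintro ⟨⟨h1, h2⟩, rfl⟩
      refine ⟨rfl, ?_⟩
      simpa using h1
    · rintro ⟨rfl, h1⟩
      refine ⟨⟨by simpa using h1, ?_⟩, rfl⟩
      intro X Y
      simp [hD0]
  refine ⟨key, ⟨?_, ?_, ?_⟩, ?_, ?_, ?_⟩
  · rintro ⟨α, ω⟩ hp
    exact ((key α ω).mp hp).2
  · rintro ⟨α, ω⟩ hp ⟨α', ω'⟩ hp' h
    have h1 := ((key α ω).mp hp).1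
    have h2 := ((key α' ω').mp hp').1
    simp only at h
    simp [Prod.ext_iff, h, h1, h2]
  · intro α hα
    exact ⟨(α, 0), (key α 0).mpr ⟨rfl, hα⟩, rfl⟩
  · intro α hα
    exact (key α 0).mpr ⟨rfl, hα⟩
  · intro α hα α' hα' h
    exact (Prod.ext_iff.mp h).1
  · rintro ⟨α, ω⟩ hp
    have := (key α ω).mp hp
    exact ⟨α, this.2, by simp [this.1.symm]⟩
end

section
/- Suppose the projection pr: P_D(F) → F is surjective. Then the kernel of pr: P_D(F) → F equals the first prolongation g^{(1)}(F, D) of the symbol map: an element of J¹_xF of the form (0, ω) with ω ∈ Hom(T_xM, F_x) belongs to P_D(F) if and only if ω takes values in g_x = ker(l)_x and ∂_D(ω(X))(Y) = ∂_D(ω(Y))(X) for all X, Y ∈ T_xM. In particular there is a short exact sequence of bundles 0 → g^{(1)}(F, D) → P_D(F) → F → 0. -/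
/-- (Algebraic model: `R = C∞(M)`, vector fields are
`Derivation ℝ R R`, sections of bundles are `R`-modules; a point of `J¹F` over `α` is a
Spencer pair `(α, ω)` with `ω ∈ Hom(TM, F)`, and elements of the kernel of
`pr : J¹F → F` are those of the form `(0, ω)`.)  Let `(D, l) : F → E` be a relative
connection with symbol space `g = ker l` and symbol map `∂_D(v)(X) = D_X(v)`, and
suppose the projection `pr : P_D(F) → F` is surjective.  Then the kernel of
`pr : P_D(F) → F` equals the first prolongation `g⁽¹⁾(F, D)`: an element `(0, ω)`
belongs to `P_D(F)` (i.e. `D(0) = l ∘ ω` and the curvature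
`D_X(ωY) − D_Y(ωX) − l(ω[X,Y])` vanishes) if and only if `ω` takes values in `g` and
`∂_D(ω X)(Y) = ∂_D(ω Y)(X)` for all `X, Y`.  In particular there is a short exact
sequence `0 → g⁽¹⁾(F, D) → P_D(F) → F → 0`. -/
theorem kernel_of_prolongation_projection_eq_first_prolongation
    {R F E : Type*} [CommRing R] [Algebra ℝ R]
    [AddCommGroup F] [Module R F] [AddCommGroup E] [Module R E]
    (l : F →ₗ[R] E) (hl : Function.Surjective l)
    (D : F → (Derivation ℝ R R →ₗ[R] E))
    (hadd : ∀ s t : F, D (s + t) = D s + D t)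
    (hleib : ∀ (f : R) (s : F) (X : Derivation ℝ R R),
      D (f • s) X = f • D s X + (X f) • l s)
    (hsurj : ∀ α : F, ∃ ω : Derivation ℝ R R →ₗ[R] F,
      D α = l ∘ₗ ω ∧
        ∀ X Y : Derivation ℝ R R, D (ω Y) X - D (ω X) Y - l (ω ⁅X, Y⁆) = 0) :
    ∀ ω : Derivation ℝ R R →ₗ[R] F,
      (D (0 : F) = l ∘ₗ ω ∧
        (∀ X Y : Derivation ℝ R R, D (ω Y) X - D (ω X) Y - l (ω ⁅X, Y⁆) = 0))
      ↔ ((∀ X : Derivation ℝ R R, l (ω X) = 0) ∧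
          ∀ X Y : Derivation ℝ R R, D (ω X) Y = D (ω Y) X) := by
  have hD0 : D (0 : F) = 0 := by
    have := hadd 0 0
    simp only [add_zero] at this
    have h2 : D (0 : F) + 0 = D (0:F) + D (0:F) := by rw [add_zero]; exact this
    exact (add_left_cancel h2).symm
  intro ω
  constructor
  · rintro ⟨h1, h2⟩
    have hker : ∀ X : Derivation ℝ R R, l (ω X) = 0 := by
      intro X
      have := congrArg (fun f => f X) h1
      simp [hD0] at this
      exact this.symm
    refine ⟨hker, fun X Y => ?_⟩
    have := h2 X Y
    rw [hker ⁅X, Y⁆] at this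
    rw [sub_zero, sub_eq_zero] at this
    exact this.symm
  · rintro ⟨hker, hsym⟩
    constructor
    · ext X
      simp [hD0, hker X]
    · intro X Y
      rw [hker ⁅X, Y⁆, hsym X Y]
      abel
end

section
/- Let D be a Spencer operator on a Lie algebroid A relative to a surjective bundle map l: A → E. Then the operator ∇: Γ(A) × Γ(E) → Γ(E) determined by ∇_α(l(α')) = D_{ρ(α')}(α) + l([α, α']) is well defined (independent of the representative α' of l(α')), is an A-connection, and is flat: ∇_α ∇_β − ∇_β ∇_α = ∇_{[α,β]} on Γ(E). Hence E becomes a representation of A. -/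
/-- (Algebraic model: `R = C∞(M)`, vector fields are
`Derivation ℝ R R`; a Lie algebroid is an `R`-module `A` with a Lie bracket on its
sections, an `R`-linear anchor `ρ : A → 𝔛(M)` commuting with brackets and satisfying the
Leibniz identity.)  Let `D` be a Spencer operator on `A` relative to a surjective bundle
map `l : A → E`, i.e. a relative connection satisfying
`D_{ρ(β)}(α) = −l([α, β])` for `β ∈ Γ(ker l)`.  Then the operator `∇` determined by
`∇_α(l(α')) = D_{ρ(α')}(α) + l([α, α'])` is well defined (it exists and is unique), is
an `A`-connection on `E`, and — granted the remaining Spencer compatibility condition —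
is flat: `∇_α∇_β − ∇_β∇_α = ∇_{[α,β]}`.  Hence `E` becomes a representation of `A`. -/
theorem spencer_operator_induces_flat_connection
    {R A E : Type*} [CommRing R] [Algebra ℝ R]
    [LieRing A] [Module R A] [AddCommGroup E] [Module R E]
    (ρ : A →ₗ[R] Derivation ℝ R R)
    (hρ : ∀ α β : A, ρ ⁅α, β⁆ = ⁅ρ α, ρ β⁆)
    (hLeibA : ∀ (α : A) (f : R) (β : A), ⁅α, f • β⁆ = f • ⁅α, β⁆ + (ρ α f) • β)
    (l : A →ₗ[R] E) (hl : Function.Surjective l)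
    (D : A → (Derivation ℝ R R →ₗ[R] E))
    (hadd : ∀ α β : A, D (α + β) = D α + D β)
    (hleib : ∀ (f : R) (α : A) (X : Derivation ℝ R R),
      D (f • α) X = f • D α X + (X f) • l α)
    (h1 : ∀ α β : A, l β = 0 → D α (ρ β) = -l ⁅α, β⁆) :
    ∃ nabla : A → E → E,
      (∀ α α' : A, nabla α (l α') = D α (ρ α') + l ⁅α, α'⁆) ∧
      (∀ nabla' : A → E → E,
        (∀ α α' : A, nabla' α (l α') = D α (ρ α') + l ⁅α, α'⁆) → nabla' = nabla) ∧
      (∀ (α : A) (e e' : E), nabla α (e + e') = nabla α e + nabla α e') ∧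
      (∀ (α β : A) (e : E), nabla (α + β) e = nabla α e + nabla β e) ∧
      (∀ (f : R) (α : A) (e : E), nabla (f • α) e = f • nabla α e) ∧
      (∀ (f : R) (α : A) (e : E), nabla α (f • e) = f • nabla α e + (ρ α f) • e) ∧
      ((∀ (α α' : A) (X : Derivation ℝ R R),
          D ⁅α, α'⁆ X =
            nabla α (D α' X) - D α' ⁅ρ α, X⁆ - nabla α' (D α X) + D α ⁅ρ α', X⁆) →
        ∀ (α β : A) (e : E),
          nabla α (nabla β e) - nabla β (nabla α e) = nabla ⁅α, β⁆ e) := by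
  classical
  -- the candidate value on a representative
  set g : A → A → E := fun α α' => D α (ρ α') + l ⁅α, α'⁆ with hg
  -- well-definedness
  have hwd : ∀ (α α' α'' : A), l α' = l α'' → g α α' = g α α'' := by
    intro α α' α'' h
    have hβ : l (α' - α'') = 0 := by rw [map_sub, h, sub_self]
    have h2 := h1 α (α' - α'') hβ
    have h3 : D α (ρ (α' - α'')) = D α (ρ α') - D α (ρ α'') := by
      rw [map_sub, map_sub]
    have h4 : l ⁅α, α' - α''⁆ = l ⁅α, α'⁆ - l ⁅α, α''⁆ := by
      rw [lie_sub, map_sub]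
    rw [h3, h4] at h2
    simp only [hg]
    have h5 : (D α (ρ α') + l ⁅α, α'⁆) - (D α (ρ α'') + l ⁅α, α''⁆)
        = (D α (ρ α') - D α (ρ α'')) + (l ⁅α, α'⁆ - l ⁅α, α''⁆) := by abel
    apply eq_of_sub_eq_zero
    rw [h5, h2]; abel
  have hrep : ∀ (α : A) (e : E) (α' : A), l α' = e →
      g α (hl e).choose = g α α' := fun α e α' h =>
    hwd α _ α' ((hl e).choose_spec.trans h.symm)
  refine ⟨fun α e => g α (hl e).choose, ?_, ?_, ?_, ?_, ?_, ?_, ?_⟩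
  · intro α α'
    exact hwd α _ α' (hl (l α')).choose_spec
  · intro nabla' hspec
    funext α e
    obtain ⟨γ, rfl⟩ := hl e
    rw [hspec α γ]
    exact (hwd α _ γ (hl (l γ)).choose_spec).symm
  · -- additivity in e
    intro α e e'
    obtain ⟨a, rfl⟩ := hl e
    obtain ⟨b, rfl⟩ := hl e'
    show g α (hl _).choose = g α (hl _).choose + g α (hl _).choose
    rw [hrep α _ (a + b) (by rw [map_add]), hrep α _ a rfl, hrep α _ b rfl]
    simp only [hg, map_add, add_lie, lie_add]
    abel
  · -- additivity in α
    intro α β e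
    obtain ⟨a, rfl⟩ := hl e
    show g (α + β) (hl _).choose = g α (hl _).choose + g β (hl _).choose
    rw [hrep (α + β) _ a rfl, hrep α _ a rfl, hrep β _ a rfl]
    simp only [hg, hadd, LinearMap.add_apply, add_lie, map_add]
    abel
  · -- f • α
    intro f α e
    obtain ⟨a, rfl⟩ := hl e
    show g (f • α) (hl _).choose = f • g α (hl _).choose
    rw [hrep (f • α) _ a rfl, hrep α _ a rfl]
    simp only [hg]
    have hbr : ⁅f • α, a⁆ = f • ⁅α, a⁆ - (ρ a f) • α := by
      rw [← lie_skew (f • α) a, hLeibA a f α, ← lie_skew α a, smul_neg]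
      abel
    rw [hleib f α (ρ a), hbr, map_sub, map_smul, map_smul, smul_add]
    abel
  · -- f • e
    intro f α e
    obtain ⟨a, rfl⟩ := hl e
    show g α (hl _).choose = f • g α (hl _).choose + (ρ α) f • l a
    rw [hrep α _ (f • a) (by rw [map_smul]), hrep α _ a rfl]
    simp only [hg, map_smul, hLeibA, map_add, smul_add]
    abel
  · -- flatness
    intro hcond α β e
    obtain ⟨γ, rfl⟩ := hl e
    have hkey : ∀ (α α' : A),
        g α (hl (l α')).choose = D α (ρ α') + l ⁅α, α'⁆ := by
      intro α α'; rw [hrep α _ α' rfl]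
    have haddE : ∀ (α : A) (e e' : E),
        g α (hl (e + e')).choose = g α (hl e).choose + g α (hl e').choose := by
      intro α e e'
      obtain ⟨a, rfl⟩ := hl e
      obtain ⟨b, rfl⟩ := hl e'
      rw [hrep α _ (a + b) (by rw [map_add]), hrep α _ a rfl, hrep α _ b rfl]
      simp only [hg, map_add, add_lie, lie_add]
      abel
    have hc := hcond α β (ρ γ)
    rw [← hρ α γ, ← hρ β γ] at hc
    beta_reduce at hc ⊢
    have e1 : g β (hl (l γ)).choose = D β (ρ γ) + l ⁅β, γ⁆ := hkey β γ
    have e2 : g α (hl (l γ)).choose = D α (ρ γ) + l ⁅α, γ⁆ := hkey α γ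
    rw [e1, e2, haddE, haddE, hkey α ⁅β, γ⁆, hkey β ⁅α, γ⁆, hkey ⁅α, β⁆ γ]
    have hjac : l ⁅⁅α, β⁆, γ⁆ = l ⁅α, ⁅β, γ⁆⁆ - l ⁅β, ⁅α, γ⁆⁆ := by
      rw [lie_lie, map_sub]
    rw [hjac, hc]
    abel
end

section
/- Let D be a Lie-Spencer operator relative to a surjective Lie algebroid morphism l: A → L, with symbol space g = ker(l) and symbol map ∂_D: g → Hom(TM, L), ∂_D(v)(X) = D_X(v). Then ∂_D is a morphism of bundles of Lie algebras, where Hom(TM, L) carries the fiberwise bracket [ξ, η]_ρ = ξ∘ρ∘η − η∘ρ∘ξ (ρ the anchor of L): for all α, β ∈ Γ(g), ∂_D([α, β]) = [∂_D(α), ∂_D(β)]_ρ. -/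
/-- (Algebraic model: `R = C∞(M)`, vector fields are
`Derivation ℝ R R`; Lie algebroids are `R`-modules with a Lie bracket, `R`-linear
anchors commuting with brackets, and the Leibniz identity.)  Let `D` be a Lie-Spencer
operator relative to a surjective Lie algebroid morphism `l : A → L`, i.e. a relative
connection satisfying
`D_X[α,β] − [D_Xα, l(β)] − [l(α), D_Xβ]
  = D_{ρ(D_Xβ)+[ρ(β),X]}(α) − D_{ρ(D_Xα)+[ρ(α),X]}(β)`.
Then the symbol map `∂_D : g = ker l → Hom(TM, L)`, `∂_D(v)(X) = D_X(v)`, is a morphism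
of bundles of Lie algebras for the fiberwise bracket `[ξ, η]_ρ = ξ∘ρ∘η − η∘ρ∘ξ` on
`Hom(TM, L)` (`ρ` the anchor of `L`): for all `α, β ∈ Γ(g)`,
`∂_D([α, β]) = [∂_D(α), ∂_D(β)]_ρ`. -/
theorem lie_spencer_symbol_map_is_lie_algebra_morphism
    {R A L : Type*} [CommRing R] [Algebra ℝ R]
    [LieRing A] [Module R A] [LieRing L] [Module R L]
    (ρA : A →ₗ[R] Derivation ℝ R R) (ρL : L →ₗ[R] Derivation ℝ R R)
    (hρA : ∀ α β : A, ρA ⁅α, β⁆ = ⁅ρA α, ρA β⁆)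
    (hρL : ∀ x y : L, ρL ⁅x, y⁆ = ⁅ρL x, ρL y⁆)
    (hLeibA : ∀ (α : A) (f : R) (β : A), ⁅α, f • β⁆ = f • ⁅α, β⁆ + (ρA α f) • β)
    (hLeibL : ∀ (x : L) (f : R) (y : L), ⁅x, f • y⁆ = f • ⁅x, y⁆ + (ρL x f) • y)
    (l : A →ₗ[R] L) (hl : Function.Surjective l)
    (hlb : ∀ α β : A, l ⁅α, β⁆ = ⁅l α, l β⁆)
    (hlρ : ∀ α : A, ρL (l α) = ρA α)
    (D : A → (Derivation ℝ R R →ₗ[R] L))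
    (hadd : ∀ α β : A, D (α + β) = D α + D β)
    (hleib : ∀ (f : R) (α : A) (X : Derivation ℝ R R),
      D (f • α) X = f • D α X + (X f) • l α)
    (hLS : ∀ (α β : A) (X : Derivation ℝ R R),
      D ⁅α, β⁆ X - ⁅D α X, l β⁆ - ⁅l α, D β X⁆ =
        D α (ρL (D β X) + ⁅ρA β, X⁆) - D β (ρL (D α X) + ⁅ρA α, X⁆)) :
    ∀ α β : A, l α = 0 → l β = 0 →
      D ⁅α, β⁆ = (D α) ∘ₗ ρL ∘ₗ (D β) - (D β) ∘ₗ ρL ∘ₗ (D α) := by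
  intro α β hα hβ
  have hρa : ρA α = 0 := by rw [← hlρ, hα, map_zero]
  have hρb : ρA β = 0 := by rw [← hlρ, hβ, map_zero]
  ext X
  have h := hLS α β X
  simp only [hα, hβ, hρa, hρb, zero_lie, lie_zero, sub_zero, add_zero] at h
  simpa using h
end

section
/- Let R be a commutative ring, A an R-module equipped with an ℝ-bilinear antisymmetric bracket [·,·] and an R-linear anchor ρ: A → Der(R) satisfying the Leibniz identity [ξ, r·η] = r·[ξ, η] + ρ(ξ)(r)·η. If the anchor preserves brackets, i.e. ρ([ξ, η]) = [ρ(ξ), ρ(η)] for all ξ, η ∈ A, then the Jacobiator Jac(ξ₁, ξ₂, ξ₃) := [[ξ₁, ξ₂], ξ₃] + [[ξ₂, ξ₃], ξ₁] + [[ξ₃, ξ₁], ξ₂] is R-linear in each argument; in particular, if Jac vanishes on a generating set of the R-module A, then [·,·] satisfies the Jacobi identity on all of A and (A, [·,·], ρ) is a Lie–Rinehart algebra. -/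
/-- Let `R` be a commutative ring (an `ℝ`-algebra, so that
`Der(R) = Derivation ℝ R R`), and `A` an `R`-module with an `ℝ`-bilinear antisymmetric
bracket `br` and an `R`-linear anchor `ρ : A → Der(R)` satisfying the Leibniz identity
`br ξ (r • η) = r • br ξ η + ρ(ξ)(r) • η`.  If the anchor preserves brackets,
`ρ(br ξ η) = [ρ ξ, ρ η]`, then the Jacobiator
`Jac(ξ₁, ξ₂, ξ₃) = br (br ξ₁ ξ₂) ξ₃ + br (br ξ₂ ξ₃) ξ₁ + br (br ξ₃ ξ₁) ξ₂`
is `R`-linear in each argument; in particular, if `Jac` vanishes on a generating set of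
the `R`-module `A`, then `br` satisfies the Jacobi identity on all of `A`. -/
theorem jacobiator_linear_of_anchor_morphism
    {R A : Type*} [CommRing R] [Algebra ℝ R]
    [AddCommGroup A] [Module R A] [Module ℝ A]
    (br : A → A → A)
    (haddl : ∀ ξ ξ' η, br (ξ + ξ') η = br ξ η + br ξ' η)
    (haddr : ∀ ξ η η', br ξ (η + η') = br ξ η + br ξ η')
    (hsmulℝ : ∀ (c : ℝ) (ξ η : A), br ξ (c • η) = c • br ξ η)
    (hskew : ∀ ξ η, br ξ η = -br η ξ)
    (ρ : A →ₗ[R] Derivation ℝ R R)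
    (hleib : ∀ (ξ : A) (r : R) (η : A), br ξ (r • η) = r • br ξ η + (ρ ξ r) • η)
    (hρbr : ∀ ξ η, ρ (br ξ η) = ⁅ρ ξ, ρ η⁆) :
    let Jac : A → A → A → A := fun ξ₁ ξ₂ ξ₃ =>
      br (br ξ₁ ξ₂) ξ₃ + br (br ξ₂ ξ₃) ξ₁ + br (br ξ₃ ξ₁) ξ₂
    (∀ (r : R) (ξ₁ ξ₂ ξ₃ : A), Jac (r • ξ₁) ξ₂ ξ₃ = r • Jac ξ₁ ξ₂ ξ₃) ∧
    (∀ (r : R) (ξ₁ ξ₂ ξ₃ : A), Jac ξ₁ (r • ξ₂) ξ₃ = r • Jac ξ₁ ξ₂ ξ₃) ∧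
    (∀ (r : R) (ξ₁ ξ₂ ξ₃ : A), Jac ξ₁ ξ₂ (r • ξ₃) = r • Jac ξ₁ ξ₂ ξ₃) ∧
    (∀ ξ ξ' η θ : A, Jac (ξ + ξ') η θ = Jac ξ η θ + Jac ξ' η θ) ∧
    (∀ ξ η η' θ : A, Jac ξ (η + η') θ = Jac ξ η θ + Jac ξ η' θ) ∧
    (∀ ξ η θ θ' : A, Jac ξ η (θ + θ') = Jac ξ η θ + Jac ξ η θ') ∧
    (∀ S : Set A, Submodule.span R S = ⊤ →
      (∀ ξ₁ ∈ S, ∀ ξ₂ ∈ S, ∀ ξ₃ ∈ S, Jac ξ₁ ξ₂ ξ₃ = 0) →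
      ∀ ξ₁ ξ₂ ξ₃ : A, Jac ξ₁ ξ₂ ξ₃ = 0) := by
  intro Jac
  -- bracket with zero
  have hz_r : ∀ ξ : A, br ξ 0 = 0 := by
    intro ξ
    have := hsmulℝ 0 ξ 0
    simpa using this
  have hz_l : ∀ ξ : A, br 0 ξ = 0 := by
    intro ξ; rw [hskew, hz_r, neg_zero]
  -- Leibniz in the first argument
  have hleibl : ∀ (r : R) (ξ η : A),
      br (r • ξ) η = r • br ξ η - (ρ η r) • ξ := by
    intro r ξ η
    rw [hskew, hleib, hskew η ξ, smul_neg, neg_add, neg_neg, sub_eq_add_neg]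
  -- linearity in the third slot (the key computation)
  have h3 : ∀ (r : R) (ξ₁ ξ₂ ξ₃ : A), Jac ξ₁ ξ₂ (r • ξ₃) = r • Jac ξ₁ ξ₂ ξ₃ := by
    intro r ξ₁ ξ₂ ξ₃
    have e1 : br (br ξ₁ ξ₂) (r • ξ₃)
        = r • br (br ξ₁ ξ₂) ξ₃ + (ρ ξ₁ (ρ ξ₂ r)) • ξ₃ - (ρ ξ₂ (ρ ξ₁ r)) • ξ₃ := by
      rw [hleib, hρbr]
      have : (⁅ρ ξ₁, ρ ξ₂⁆ : Derivation ℝ R R) r = ρ ξ₁ (ρ ξ₂ r) - ρ ξ₂ (ρ ξ₁ r) := rfl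
      rw [this, sub_smul]; abel
    have e2 : br (br ξ₂ (r • ξ₃)) ξ₁
        = r • br (br ξ₂ ξ₃) ξ₁ - (ρ ξ₁ r) • br ξ₂ ξ₃
          + ((ρ ξ₂ r) • br ξ₃ ξ₁ - (ρ ξ₁ (ρ ξ₂ r)) • ξ₃) := by
      rw [hleib, haddl, hleibl, hleibl]
    have e3 : br (br (r • ξ₃) ξ₁) ξ₂
        = r • br (br ξ₃ ξ₁) ξ₂ - (ρ ξ₂ r) • br ξ₃ ξ₁
          - ((ρ ξ₁ r) • br ξ₃ ξ₂ - (ρ ξ₂ (ρ ξ₁ r)) • ξ₃) := by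
      rw [hleibl, show (r • br ξ₃ ξ₁ - ρ ξ₁ r • ξ₃)
            = r • br ξ₃ ξ₁ + (-(ρ ξ₁ r • ξ₃)) by abel,
          haddl]
      rw [show (-(ρ ξ₁ r • ξ₃)) = ((-1 : R) * ρ ξ₁ r) • ξ₃ by
            rw [neg_one_mul, neg_smul],
          hleibl, hleibl]
      simp only [neg_one_mul, neg_smul, map_neg]
      abel
    have hs : br ξ₃ ξ₂ = -br ξ₂ ξ₃ := hskew ξ₃ ξ₂
    show br (br ξ₁ ξ₂) (r • ξ₃) + br (br ξ₂ (r • ξ₃)) ξ₁ + br (br (r • ξ₃) ξ₁) ξ₂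
        = r • (br (br ξ₁ ξ₂) ξ₃ + br (br ξ₂ ξ₃) ξ₁ + br (br ξ₃ ξ₁) ξ₂)
    rw [e1, e2, e3, hs]
    simp only [smul_add, smul_neg]
    abel
  -- cyclic symmetry
  have hcyc : ∀ a b c : A, Jac a b c = Jac c a b := by
    intro a b c
    show br (br a b) c + br (br b c) a + br (br c a) b
        = br (br c a) b + br (br a b) c + br (br b c) a
    abel
  have h1 : ∀ (r : R) (ξ₁ ξ₂ ξ₃ : A), Jac (r • ξ₁) ξ₂ ξ₃ = r • Jac ξ₁ ξ₂ ξ₃ := by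
    intro r ξ₁ ξ₂ ξ₃
    rw [hcyc (r • ξ₁) ξ₂ ξ₃, hcyc ξ₃ (r • ξ₁) ξ₂, h3, hcyc ξ₁ ξ₂ ξ₃, hcyc ξ₃ ξ₁ ξ₂]
  have h2 : ∀ (r : R) (ξ₁ ξ₂ ξ₃ : A), Jac ξ₁ (r • ξ₂) ξ₃ = r • Jac ξ₁ ξ₂ ξ₃ := by
    intro r ξ₁ ξ₂ ξ₃
    rw [hcyc ξ₁ (r • ξ₂) ξ₃, h3, hcyc ξ₁ ξ₂ ξ₃]
  have ha1 : ∀ ξ ξ' η θ : A, Jac (ξ + ξ') η θ = Jac ξ η θ + Jac ξ' η θ := by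
    intro ξ ξ' η θ
    show br (br (ξ + ξ') η) θ + br (br η θ) (ξ + ξ') + br (br θ (ξ + ξ')) η = _
    rw [haddl, haddl, haddr, haddr, haddl]
    show _ = br (br ξ η) θ + br (br η θ) ξ + br (br θ ξ) η
        + (br (br ξ' η) θ + br (br η θ) ξ' + br (br θ ξ') η)
    abel
  have ha3 : ∀ ξ η θ θ' : A, Jac ξ η (θ + θ') = Jac ξ η θ + Jac ξ η θ' := by
    intro ξ η θ θ'
    rw [hcyc ξ η (θ + θ'), ha1, ← hcyc ξ η θ, ← hcyc ξ η θ']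
  have ha2 : ∀ ξ η η' θ : A, Jac ξ (η + η') θ = Jac ξ η θ + Jac ξ η' θ := by
    intro ξ η η' θ
    rw [hcyc ξ (η + η') θ, ha3, ← hcyc ξ η θ, ← hcyc ξ η' θ]
  refine ⟨h1, h2, h3, ha1, ha2, ha3, ?_⟩
  -- Jac vanishes when an argument is zero
  have hjz3 : ∀ a b : A, Jac a b 0 = 0 := by
    intro a b
    show br (br a b) 0 + br (br b 0) a + br (br 0 a) b = 0
    simp only [hz_r, hz_l, add_zero]
  have hjz1 : ∀ a b : A, Jac 0 a b = 0 := by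
    intro a b; rw [hcyc, hcyc]; exact hjz3 a b
  have hjz2 : ∀ a b : A, Jac a 0 b = 0 := by
    intro a b; rw [hcyc]; exact hjz3 b a
  intro S hspan h0 ξ₁ ξ₂ ξ₃
  have m : ∀ x : A, x ∈ Submodule.span R S := by
    intro x; rw [hspan]; trivial
  -- induct on ξ₁
  induction m ξ₁ using Submodule.span_induction with
  | zero => exact hjz1 ξ₂ ξ₃
  | add x y _ _ hx hy => rw [ha1, hx, hy, add_zero]
  | smul r x _ hx => rw [h1, hx, smul_zero]
  | mem x hxS =>
    induction m ξ₂ using Submodule.span_induction with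
    | zero => exact hjz2 x ξ₃
    | add y z _ _ hy hz => rw [ha2, hy, hz, add_zero]
    | smul r y _ hy => rw [h2, hy, smul_zero]
    | mem y hyS =>
      induction m ξ₃ using Submodule.span_induction with
      | zero => exact hjz3 x y
      | add z w _ _ hz hw => rw [ha3, hz, hw, add_zero]
      | smul r z _ hz => rw [h3, hz, smul_zero]
      | mem z hzS => exact h0 x hxS y hyS z hzS
end
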